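/- For every n ≥ 4, the quiver Γ^{n}_{n−3,1,1} of coloured oriented single and paired diagonals of a regular n-gon, associated to the tree T_{n−3,1,1} = D_n, is isomorphic as a stable translation quiver to Z D_n/⟨τ^{-n} ρ^{n}⟩, the Auslander–Reiten quiver of the cluster category C_{D_n} = D^b(mod kD_n)/τ^{-1}Σ (on Z D_n the shift Σ acts as τ^{-(n−1)} composed with the diagram automorphism ρ when n is odd, and as τ^{-(n−1)} when n is even). -/

import Mathlib

/-!
Coloured oriented single and paired diagonals in a regular polygon, following
L. Lamberti, "Combinatorial model for the cluster categories of type E".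

The vertices of the regular `m`-gon `Π` are labelled by `ZMod m` (clockwise).
A coloured oriented diagonal `[i,j]_c` is encoded by the structure `Diag`;
the colour `P` encodes a *paired* diagonal `[i,j]_P = {[i,j]_R, [j,i]_B}`.
-/

inductive Colour : Type
  | R : Colour
  | B : Colour
  | P : Colour
deriving DecidableEq

/-- A coloured oriented (single or paired) diagonal `[i,j]_c` of the regular
`m`-gon (for `m = 0` we interpret `ZMod 0 = ℤ` as the infinite-sided polygon). -/
structure Diag (m : ℕ) where
  i : ZMod m
  j : ZMod m
  c : Colour
deriving DecidableEq

/-- The simultaneous change of colour and orientation: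
`ρ([i,j]_R) = [j,i]_B`, `ρ([i,j]_B) = [j,i]_R`, `ρ([i,j]_P) = [i,j]_P`. -/
def rho {m : ℕ} : Diag m → Diag m
  | ⟨i, j, Colour.R⟩ => ⟨j, i, Colour.B⟩
  | ⟨i, j, Colour.B⟩ => ⟨j, i, Colour.R⟩
  | ⟨i, j, Colour.P⟩ => ⟨i, j, Colour.P⟩

/-- The anticlockwise rotation `[i,j]_c ↦ [i-1,j-1]_c`. -/
def shiftD {m : ℕ} (d : Diag m) : Diag m := ⟨d.i - 1, d.j - 1, d.c⟩

/-- The slice of `Π_{r,s,t}` based at the vertex `i` of `Π`: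
the paired diagonals `[i,i+2]_P, …, [i,i+r+2]_P`, the red single diagonals
`[i,i+r+3]_R, …, [i,i+r+s+2]_R` and the blue single diagonals
`[i+r+3,i]_B, …, [i+r+t+2,i]_B`. -/
def PiSetAt (r s t : ℕ) {m : ℕ} (i : ZMod m) : Set (Diag m) :=
  {d | (∃ k : ℕ, 2 ≤ k ∧ k ≤ r + 2 ∧ d = ⟨i, i + (k : ZMod m), Colour.P⟩) ∨
       (∃ k : ℕ, r + 3 ≤ k ∧ k ≤ r + s + 2 ∧ d = ⟨i, i + (k : ZMod m), Colour.R⟩) ∨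
       (∃ k : ℕ, r + 3 ≤ k ∧ k ≤ r + t + 2 ∧ d = ⟨i + (k : ZMod m), i, Colour.B⟩)}

/-- The set `Π_{r,s,t}` of coloured oriented single and paired diagonals of the
regular `m`-gon associated to the tree `T_{r,s,t}`. -/
def PiSet (r s t m : ℕ) : Set (Diag m) := ⋃ i : ZMod m, PiSetAt r s t i

open Classical in
/-- The translation `τ` on coloured oriented diagonals: the anticlockwise
rotation `[i,j]_c ↦ [i-1,j-1]_c`, composed with `ρ^{m}` on the first slice
`Π_{r,s,t}|_1` when the tree is symmetric (`s = t`). -/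
noncomputable def tauD (r s t : ℕ) {m : ℕ} (d : Diag m) : Diag m :=
  if s = t ∧ d ∈ PiSetAt r s t (1 : ZMod m) then rho^[m] (shiftD d) else shiftD d

/-- Minimal clockwise rotations (before the colour adjustment at the seam):
`[k,l]_c → [k,l+1]_c`, `[k,l]_c → [k+1,l]_c`, together with
`[k,k+r+2]_P → [k,k+r+3]_R`, `[k,k+r+2]_P → [k+r+3,k]_B`,
`[k,k+r+3]_R → [k+1,k+r+3]_P` and `[k+r+3,k]_B → [k+1,k+r+3]_P`. -/
def Rot (r : ℕ) {m : ℕ} (a b : Diag m) : Prop :=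
  b = ⟨a.i, a.j + 1, a.c⟩ ∨ b = ⟨a.i + 1, a.j, a.c⟩ ∨
  (∃ k : ZMod m, a = ⟨k, k + ((r : ZMod m) + 2), Colour.P⟩ ∧
    (b = ⟨k, k + ((r : ZMod m) + 3), Colour.R⟩ ∨
     b = ⟨k + ((r : ZMod m) + 3), k, Colour.B⟩)) ∨
  (∃ k : ZMod m,
    (a = ⟨k, k + ((r : ZMod m) + 3), Colour.R⟩ ∨
     a = ⟨k + ((r : ZMod m) + 3), k, Colour.B⟩) ∧
    b = ⟨k + 1, k + ((r : ZMod m) + 3), Colour.P⟩)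

/-- In the symmetric case `s = t` with an odd-sided polygon, the arrows whose
source lies in `τ(Π_{r,t,t}|_1)` and whose (unadjusted) target lies in the
first slice `Π_{r,t,t}|_1` additionally change colour and orientation. -/
def SeamTwist (r s t m : ℕ) (a b₀ : Diag m) : Prop :=
  s = t ∧ Odd m ∧ a ∈ (tauD r s t) '' (PiSetAt r s t (1 : ZMod m)) ∧
    b₀ ∈ PiSetAt r s t (1 : ZMod m)

/-- The arrows of the quiver `Γ^{m}_{r,s,t}`: minimal clockwise rotations
between elements of `Π_{r,s,t}`, adjusted by `ρ` at the seam. -/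
def ArrowD (r s t m : ℕ) (a b : Diag m) : Prop :=
  a ∈ PiSet r s t m ∧ b ∈ PiSet r s t m ∧
    ∃ b₀, Rot r a b₀ ∧
      ((SeamTwist r s t m a b₀ ∧ b = rho b₀) ∨ (¬ SeamTwist r s t m a b₀ ∧ b = b₀))

/-- The vertices of the tree `T_{r,s,t}`: a central vertex together with three
legs having `r`, `s`, `t` vertices respectively. -/
inductive TVert (r s t : ℕ) : Type
  | center : TVert r s t
  | legA : Fin r → TVert r s t
  | legB : Fin s → TVert r s t
  | legC : Fin t → TVert r s t
deriving DecidableEq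

/-- An orientation of the tree `T_{r,s,t}`: the `A`-leg points towards the
centre, the `B`- and `C`-legs point away from it. -/
def TArrow {r s t : ℕ} (x y : TVert r s t) : Prop :=
  (∃ k l : Fin r, (l : ℕ) + 1 = (k : ℕ) ∧ x = TVert.legA k ∧ y = TVert.legA l) ∨
  (∃ k : Fin r, (k : ℕ) = 0 ∧ x = TVert.legA k ∧ y = TVert.center) ∨
  (∃ k : Fin s, (k : ℕ) = 0 ∧ x = TVert.center ∧ y = TVert.legB k) ∨
  (∃ k l : Fin s, (k : ℕ) + 1 = (l : ℕ) ∧ x = TVert.legB k ∧ y = TVert.legB l) ∨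
  (∃ k : Fin t, (k : ℕ) = 0 ∧ x = TVert.center ∧ y = TVert.legC k) ∨
  (∃ k l : Fin t, (k : ℕ) + 1 = (l : ℕ) ∧ x = TVert.legC k ∧ y = TVert.legC l)

/-- The order-two graph automorphism of a symmetric tree `T_{r,t,t}`,
exchanging its two legs of length `t`. -/
def treeRho {r t : ℕ} : TVert r t t → TVert r t t
  | TVert.center => TVert.center
  | TVert.legA k => TVert.legA k
  | TVert.legB k => TVert.legC k
  | TVert.legC k => TVert.legB k

/-- `treeRho` as a permutation. -/
def treeRhoPerm (r t : ℕ) : Equiv.Perm (TVert r t t) :=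
  Function.Involutive.toPerm treeRho (by intro x; cases x <;> rfl)

/-- The translation of the repetitive quiver `ℤQ`: `τ(m,i) = (m-1,i)`. -/
def ZTau {V : Type} (x : ℤ × V) : ℤ × V := (x.1 - 1, x.2)

/-- The arrows of the repetitive quiver `ℤQ` of a quiver with arrow relation
`A`: for each arrow `i → j` of `Q` there are arrows `(m,i) → (m,j)` and
`(m,j) → (m+1,i)`. -/
def ZArrow {V : Type} (A : V → V → Prop) (x y : ℤ × V) : Prop :=
  (y.1 = x.1 ∧ A x.2 y.2) ∨ (y.1 = x.1 + 1 ∧ A y.2 x.2)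

/-- The automorphism `τ^{-m} σ` of `ℤQ` given by shifting `m` steps to the
right and applying the graph automorphism `σ` of `Q`. -/
def shiftPerm {V : Type} (m : ℕ) (σ : Equiv.Perm V) : Equiv.Perm (ℤ × V) :=
  (Equiv.addRight (m : ℤ)).prodCongr σ

/-- `φ` exhibits the quiver `Γ^{m}_{r,s,t}` (with vertex set `PiSet r s t m`,
arrow relation `ArrowD` and translation `tauD`) as the quotient of the
repetitive quiver `ℤQ` (with arrow relation `ZArrow A` and translation `ZTau`)
by the cyclic group generated by the automorphism `g`, as stable translation
quivers: `φ` is surjective onto the vertex set, its fibres are exactly the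
`g`-orbits, it commutes with the translations, and the arrows of
`Γ^{m}_{r,s,t}` correspond exactly to the `g`-orbits of arrows of `ℤQ`. -/
def IsQuotientIso (r s t m : ℕ) {V : Type} (A : V → V → Prop)
    (g : Equiv.Perm (ℤ × V)) (φ : ℤ × V → Diag m) : Prop :=
  (∀ x, φ x ∈ PiSet r s t m) ∧
  (∀ d ∈ PiSet r s t m, ∃ x, φ x = d) ∧
  (∀ x y, φ x = φ y ↔ ∃ k : ℤ, (g ^ k) x = y) ∧
  (∀ x, φ (ZTau x) = tauD r s t (φ x)) ∧
  (∀ x y, ArrowD r s t m (φ x) (φ y) ↔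
    ∃ y', (∃ k : ℤ, (g ^ k) y = y') ∧ ZArrow A x y')

/-!
Number the vertices of `T_{r,1,1}` by `level`: the two short legs have level `0`, the centre
level `1` and the long leg levels `2, …, r + 1`. Then `w → w'` is an arrow exactly when `w` is
not on a short leg and `level w = level w' + 1`. For `n = r + 3`, the map
`(i, w) ↦ [i, i - level w]` (paired, or a red resp. blue loop on the short legs) identifies the
cylinder `ℤ/n × T_{r,1,1}` with `Π_{r,1,1}`, and a minimal clockwise rotation lowers the level
by one inside a slice or raises it by one into the next slice, just like the arrows
`(m, i) → (m, j)` and `(m, j) → (m + 1, i)` of `ℤQ`.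

A vertex `(m, v)` of `ℤ D_n` reaches the cylinder after a power of `g = τ^{-n} ρ^n` has moved it
into the fundamental domain `1 ≤ m ≤ n`. The seam of that domain, between slices `1` and `0`, is
where the translation of `Π_{r,1,1}` applies `ρ^n`. The colour twist of the arrows at the seam is
invisible: arrows between slices start at `ρ`-fixed vertices, whose diagonals are paired.
-/

namespace TVert

variable {r : ℕ}

def level : TVert r 1 1 → ℕ
  | center => 1
  | legA a => a + 2
  | legB _ => 0
  | legC _ => 0

def colour : TVert r 1 1 → Colour
  | center => .P
  | legA _ => .P
  | legB _ => .R
  | legC _ => .B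

lemma level_lt (w : TVert r 1 1) : w.level < r + 2 := by
  cases w <;> simp [level]

lemma level_eq_of_natCast_eq {w : TVert r 1 1} {b : ℕ} (hb : b < r + 3)
    (h : (w.level : ZMod (r + 3)) = b) : w.level = b := by
  have := w.level_lt
  simpa [ZMod.val_natCast_of_lt hb, ZMod.val_natCast_of_lt (by omega : w.level < r + 3)]
    using congrArg ZMod.val h

lemma colour_eq_P_iff (w : TVert r 1 1) : w.colour = .P ↔ w.level ≠ 0 := by
  cases w <;> simp [colour, level]

lemma eq_of_level_eq_of_colour_eq {w w' : TVert r 1 1} (hl : w.level = w'.level)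
    (hc : w.colour = w'.colour) : w = w' := by
  cases w <;> cases w' <;> simp_all [level, colour, Fin.ext_iff, Subsingleton.elim _ (0 : Fin 1)]

lemma level_eq_zero_iff (w : TVert r 1 1) : w.level = 0 ↔ w.colour = .R ∨ w.colour = .B := by
  cases w <;> simp [colour, level]

lemma exists_level_eq {L : ℕ} (h1 : 1 ≤ L) (h2 : L < r + 2) :
    ∃ w : TVert r 1 1, w.level = L := by
  rcases Nat.lt_or_ge L 2 with h | h
  · exact ⟨center, (by omega : 1 = L)⟩
  · exact ⟨legA ⟨L - 2, by omega⟩, (by omega : L - 2 + 2 = L)⟩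

lemma tArrow_iff {w w' : TVert r 1 1} :
    TArrow w w' ↔ w.colour = .P ∧ w.level = w'.level + 1 := by
  cases w <;> cases w' <;> simp [level, colour, TArrow, eq_comm]

lemma treeRho_treeRho {t : ℕ} (w : TVert r t t) : treeRho (treeRho w) = w := by
  cases w <;> rfl

lemma treeRho_eq_self_of_tArrow {w w' : TVert r 1 1} (h : TArrow w w') : treeRho w = w := by
  cases w <;> simp_all [tArrow_iff, colour, treeRho]

lemma tArrow_treeRho_iff {w w' : TVert r 1 1} :
    TArrow (treeRho w) (treeRho w') ↔ TArrow w w' := by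
  cases w <;> cases w' <;> simp [tArrow_iff, treeRho, level, colour]

end TVert

lemma Int.sub_one_ediv_of_dvd {a b : ℤ} (hb : 0 < b) (h : b ∣ a) : (a - 1) / b = a / b - 1 := by
  obtain ⟨q, rfl⟩ := h
  rw [Int.ediv_eq_iff_of_pos hb, Int.mul_ediv_cancel_left _ hb.ne']
  constructor <;> linarith

lemma Int.sub_one_ediv_of_not_dvd {a b : ℤ} (hb : 0 < b) (h : ¬ b ∣ a) :
    (a - 1) / b = a / b := by
  rw [Int.ediv_eq_iff_of_pos hb]
  have := Int.emod_add_ediv_mul a b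
  have := Int.emod_lt_of_pos a hb
  have : 0 < a % b := lt_of_le_of_ne (Int.emod_nonneg a hb.ne')
    (Ne.symm fun h0 => h (Int.dvd_of_emod_eq_zero h0))
  constructor <;> linarith

lemma Equiv.Perm.rel_zpow_apply_iff {V : Type*} {A : V → V → Prop} {s : Equiv.Perm V}
    (hA : ∀ i j, A (s i) (s j) ↔ A i j) (k : ℤ) (i j : V) :
    A ((s ^ k) i) ((s ^ k) j) ↔ A i j := by
  induction k using Int.induction_on generalizing i j with
  | zero => simp
  | succ k ih => simp only [zpow_add_one, Equiv.Perm.mul_apply, ih, hA]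
  | pred k ih =>
    simp only [zpow_sub_one, Equiv.Perm.mul_apply, ih]
    simpa using (hA (s⁻¹ i) (s⁻¹ j)).symm

section Cylinder

variable {V : Type} {n : ℕ}

def CylArrow (A : V → V → Prop) (p q : ZMod n × V) : Prop :=
  (q.1 = p.1 ∧ A p.2 q.2) ∨ (q.1 = p.1 + 1 ∧ A q.2 p.2)

def cylTau (s : Equiv.Perm V) (p : ZMod n × V) : ZMod n × V :=
  (p.1 - 1, if p.1 = 1 then s p.2 else p.2)

/-- `(x.1 - 1) / n` is the block `q` with `q n < x.1 ≤ q n + n`, and `s ^ (-q)` is the tree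
part of the `g ^ (-q)` that moves `x` into the fundamental domain `1 ≤ x.1 ≤ n`. -/
def toCyl (n : ℕ) (s : Equiv.Perm V) (x : ℤ × V) : ZMod n × V :=
  (x.1, (s ^ (-((x.1 - 1) / n))) x.2)

variable (s : Equiv.Perm V)

lemma shiftPerm_zpow_apply (k : ℤ) (x : ℤ × V) :
    (shiftPerm n s ^ k) x = (x.1 + k * n, (s ^ k) x.2) := by
  induction k using Int.induction_on generalizing x with
  | zero => simp
  | succ k ih =>
    rw [zpow_add_one, Equiv.Perm.mul_apply, ih]
    simp only [shiftPerm, Equiv.prodCongr_apply, Equiv.coe_addRight, Prod.map_fst, Prod.map_snd,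
      zpow_add_one, Equiv.Perm.coe_mul, Function.comp_apply, Prod.mk.injEq, and_true]
    ring
  | pred k ih =>
    rw [zpow_sub_one, Equiv.Perm.mul_apply, ih]
    simp only [shiftPerm, Equiv.Perm.inv_def, Equiv.prodCongr_symm, Equiv.addRight_symm,
      Equiv.prodCongr_apply, Equiv.coe_addRight, Prod.map_fst, Prod.map_snd, zpow_sub_one,
      Equiv.Perm.coe_mul, Function.comp_apply, Prod.mk.injEq, and_true]
    ring

lemma toCyl_shiftPerm_zpow (hn : n ≠ 0) (k : ℤ) (x : ℤ × V) :
    toCyl n s ((shiftPerm n s ^ k) x) = toCyl n s x := by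
  have hq : (x.1 + k * n - 1) / n = (x.1 - 1) / n + k := by
    rw [show x.1 + k * n - 1 = x.1 - 1 + k * n by ring,
      Int.add_mul_ediv_right _ _ (by exact_mod_cast hn)]
  simp only [toCyl, shiftPerm_zpow_apply, hq, ← Equiv.Perm.mul_apply, ← zpow_add]
  simp

lemma toCyl_eq_toCyl_iff (hn : n ≠ 0) {x y : ℤ × V} :
    toCyl n s x = toCyl n s y ↔ ∃ k : ℤ, (shiftPerm n s ^ k) x = y := by
  refine ⟨fun h => ?_, fun ⟨k, hk⟩ => hk ▸ (toCyl_shiftPerm_zpow s hn k x).symm⟩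
  obtain ⟨k, hk⟩ := (ZMod.intCast_eq_intCast_iff_dvd_sub _ _ _).mp (congrArg Prod.fst h)
  refine ⟨k, Prod.ext ?_ ?_⟩
  · rw [shiftPerm_zpow_apply]; linarith
  · have hy := (toCyl_shiftPerm_zpow s hn k x).trans h
    have h1 : ((shiftPerm n s ^ k) x).1 = y.1 := by rw [shiftPerm_zpow_apply]; linarith
    simp only [toCyl, h1, Prod.mk.injEq] at hy
    exact (s ^ _).injective hy.2

lemma toCyl_surjective : Function.Surjective (toCyl n s) := by
  rintro ⟨i, w⟩
  refine ⟨(i.cast, (s ^ ((i.cast - 1 : ℤ) / n)) w), ?_⟩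
  simp [toCyl, ← Equiv.Perm.mul_apply]

lemma toCyl_zTau (hn : n ≠ 0) (x : ℤ × V) : toCyl n s (ZTau x) = cylTau s (toCyl n s x) := by
  obtain ⟨m, v⟩ := x
  have hn' : (0 : ℤ) < n := by omega
  have hdvd : (m : ZMod n) = 1 ↔ (n : ℤ) ∣ m - 1 := by
    rw [← ZMod.intCast_eq_intCast_iff_dvd_sub, Int.cast_one, eq_comm]
  by_cases h : (m : ZMod n) = 1
  · simp only [ZTau, toCyl, cylTau, h, if_true, Int.cast_sub, Int.cast_one, Prod.mk.injEq,
      true_and, Int.sub_one_ediv_of_dvd hn' (hdvd.mp h), ← Equiv.Perm.mul_apply, ← zpow_one_add]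
    ring_nf
  · simp only [ZTau, toCyl, cylTau, h, if_false, Int.cast_sub, Int.cast_one,
      Int.sub_one_ediv_of_not_dvd hn' (mt hdvd.mpr h)]

lemma exists_zArrow_toCyl_eq_iff {A : V → V → Prop} (hA : ∀ i j, A (s i) (s j) ↔ A i j)
    (hsrc : ∀ i j, A i j → s i = i) (x : ℤ × V) (p : ZMod n × V) :
    (∃ y, ZArrow A x y ∧ toCyl n s y = p) ↔ CylArrow A (toCyl n s x) p := by
  have hfix : ∀ {i j} (k : ℤ), A i j → (s ^ k) i = i := fun k h =>
    Equiv.Perm.zpow_apply_eq_self_of_apply_eq_self (hsrc _ _ h) k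
  have hA' := Equiv.Perm.rel_zpow_apply_iff hA
  obtain ⟨m, v⟩ := x
  set k := -((m - 1) / n)
  have hcyl : toCyl n s (m, v) = ((m : ZMod n), (s ^ k) v) := rfl
  rw [hcyl]
  constructor
  · rintro ⟨⟨m', w⟩, ⟨rfl, hvw⟩ | ⟨rfl, hwv⟩, rfl⟩
    · exact Or.inl ⟨rfl, (hA' k v w).mpr hvw⟩
    · refine Or.inr ⟨by simp [toCyl], ?_⟩
      simpa only [toCyl, hfix _ hwv] using (hA' k w v).mpr hwv
  · obtain ⟨i, w⟩ := p
    rintro (⟨rfl, h⟩ | ⟨rfl, h⟩)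
    · refine ⟨(m, (s ^ (-k)) w), Or.inl ⟨rfl, ?_⟩, ?_⟩
      · rw [← hA' k, ← Equiv.Perm.mul_apply, ← zpow_add, add_neg_cancel, zpow_zero,
          Equiv.Perm.one_apply]
        exact h
      · simp [toCyl, k, ← Equiv.Perm.mul_apply]
    · have hw : ∀ k : ℤ, (s ^ k) w = w := fun k => hfix k h
      refine ⟨(m + 1, w), Or.inr ⟨rfl, ?_⟩, ?_⟩
      · exact (hA' k w v).mp (by rwa [hw])
      · simp only [toCyl, hw, Int.cast_add, Int.cast_one]

end Cylinder

lemma treeRho_eq_self_of_cylArrow {r n : ℕ} {p q : ZMod n × TVert r 1 1}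
    (h : CylArrow TArrow p q) (hne : q.1 ≠ p.1) : treeRho q.2 = q.2 :=
  TVert.treeRho_eq_self_of_tArrow (h.resolve_left fun h' => hne h'.1).2

lemma rho_rho {m : ℕ} (d : Diag m) : rho (rho d) = d := by
  obtain ⟨i, j, c⟩ := d
  cases c <;> rfl

section Diagonals

variable {r : ℕ}

def diagOf (p : ZMod (r + 3) × TVert r 1 1) : Diag (r + 3) :=
  ⟨p.1, p.1 - p.2.level, p.2.colour⟩

lemma ZMod.natCast_add_two_eq_neg_one : (r : ZMod (r + 3)) + 2 = -1 := by
  have h := ZMod.natCast_self (r + 3)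
  push_cast at h
  linear_combination h

lemma ZMod.natCast_add_three_eq_zero : (r : ZMod (r + 3)) + 3 = 0 := by
  exact_mod_cast ZMod.natCast_self (r + 3)

lemma diagOf_injective : Function.Injective (diagOf (r := r)) := by
  rintro ⟨i, w⟩ ⟨i', w'⟩ h
  simp only [diagOf, Diag.mk.injEq] at h
  obtain ⟨rfl, hl, hc⟩ := h
  have := w'.level_lt
  rw [sub_right_inj] at hl
  rw [TVert.eq_of_level_eq_of_colour_eq (TVert.level_eq_of_natCast_eq (by omega) hl) hc]

lemma mem_piSetAt_iff {d : Diag (r + 3)} {i : ZMod (r + 3)} :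
    d ∈ PiSetAt r 1 1 i ↔ ∃ w, diagOf (i, w) = d := by
  have h3 := ZMod.natCast_add_three_eq_zero (r := r)
  constructor
  · rintro (⟨k, hk2, hkr, rfl⟩ | ⟨k, hk1, hk2, rfl⟩ | ⟨k, hk1, hk2, rfl⟩)
    · obtain ⟨w, hw⟩ := TVert.exists_level_eq (r := r) (L := r + 3 - k) (by omega) (by omega)
      refine ⟨w, ?_⟩
      simp only [diagOf, hw, (TVert.colour_eq_P_iff w).mpr (by omega), Diag.mk.injEq, true_and,
        and_true, Nat.cast_sub (by omega : k ≤ r + 3)]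
      push_cast
      linear_combination -h3
    · obtain rfl : k = r + 3 := by omega
      exact ⟨.legB 0, by simp [diagOf, TVert.level, TVert.colour]⟩
    · obtain rfl : k = r + 3 := by omega
      exact ⟨.legC 0, by simp [diagOf, TVert.level, TVert.colour]⟩
  · rintro ⟨w, rfl⟩
    have := w.level_lt
    by_cases h0 : w.level = 0
    · rcases (TVert.level_eq_zero_iff w).mp h0 with hc | hc
      · exact Or.inr (Or.inl ⟨r + 3, le_rfl, le_rfl, by simp [diagOf, h0, hc]⟩)
      · exact Or.inr (Or.inr ⟨r + 3, le_rfl, le_rfl, by simp [diagOf, h0, hc]⟩)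
    · refine Or.inl ⟨r + 3 - w.level, by omega, by omega, ?_⟩
      simp only [diagOf, (TVert.colour_eq_P_iff w).mpr h0, Diag.mk.injEq, true_and, and_true,
        Nat.cast_sub (by omega : w.level ≤ r + 3)]
      push_cast
      linear_combination -h3

lemma diagOf_mem (p : ZMod (r + 3) × TVert r 1 1) : diagOf p ∈ PiSet r 1 1 (r + 3) :=
  Set.mem_iUnion.mpr ⟨p.1, mem_piSetAt_iff.mpr ⟨p.2, rfl⟩⟩

lemma exists_diagOf_eq {d : Diag (r + 3)} (hd : d ∈ PiSet r 1 1 (r + 3)) :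
    ∃ p, diagOf p = d := by
  obtain ⟨i, hi⟩ := Set.mem_iUnion.mp hd
  obtain ⟨w, hw⟩ := mem_piSetAt_iff.mp hi
  exact ⟨(i, w), hw⟩

lemma rho_diagOf (i : ZMod (r + 3)) (w : TVert r 1 1) :
    rho (diagOf (i, w)) = diagOf (i, treeRho w) := by
  cases w <;> simp [diagOf, rho, treeRho, TVert.level, TVert.colour]

lemma rho_iterate_diagOf (k : ℕ) (i : ZMod (r + 3)) (w : TVert r 1 1) :
    rho^[k] (diagOf (i, w)) = diagOf (i, (treeRhoPerm r 1 ^ k) w) := by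
  induction k with
  | zero => rfl
  | succ k ih =>
    rw [Function.iterate_succ_apply', ih, rho_diagOf, pow_succ', Equiv.Perm.mul_apply]
    rfl

lemma tauD_diagOf (p : ZMod (r + 3) × TVert r 1 1) :
    tauD r 1 1 (diagOf p) = diagOf (cylTau (treeRhoPerm r 1 ^ (r + 3)) p) := by
  obtain ⟨i, w⟩ := p
  have hmem : diagOf (i, w) ∈ PiSetAt r 1 1 1 ↔ i = 1 := by
    rw [mem_piSetAt_iff]
    exact ⟨fun ⟨w', h⟩ => (Prod.ext_iff.mp (diagOf_injective h)).1.symm,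
      fun h => ⟨w, h ▸ rfl⟩⟩
  have hshift : shiftD (diagOf (i, w)) = diagOf (i - 1, w) := by
    simp only [shiftD, diagOf, Diag.mk.injEq, true_and, and_true]
    ring
  by_cases h : i = 1
  · rw [tauD, if_pos ⟨rfl, hmem.mpr h⟩, hshift, rho_iterate_diagOf, cylTau, if_pos h]
  · rw [tauD, if_neg fun h' => h (hmem.mp h'.2), hshift, cylTau, if_neg h]

lemma cylArrow_of_rot_diagOf {p q : ZMod (r + 3) × TVert r 1 1}
    (h : Rot r (diagOf p) (diagOf q)) : CylArrow TArrow p q := by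
  obtain ⟨i, w⟩ := p
  obtain ⟨i', w'⟩ := q
  have := w.level_lt
  have := w'.level_lt
  simp only [CylArrow, TVert.tArrow_iff]
  simp only [Rot, diagOf, Diag.mk.injEq, ZMod.natCast_add_two_eq_neg_one,
    ZMod.natCast_add_three_eq_zero, add_zero] at h
  rcases h with ⟨rfl, h, hc⟩ | ⟨rfl, h, hc⟩ | ⟨k, ⟨rfl, h, hc⟩, hb⟩ |
    ⟨k, ha, rfl, h', hc'⟩
  · have hl : w.level = w'.level + 1 :=
      TVert.level_eq_of_natCast_eq (by omega) (by push_cast; linear_combination h)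
    exact Or.inl ⟨rfl, w.colour_eq_P_iff.mpr (by omega), hl⟩
  · have hl : w'.level = w.level + 1 :=
      TVert.level_eq_of_natCast_eq (by omega) (by push_cast; linear_combination -h)
    exact Or.inr ⟨rfl, w'.colour_eq_P_iff.mpr (by omega), hl⟩
  · obtain ⟨rfl, h', -⟩ | ⟨rfl, h', -⟩ := hb <;> (
    have h1 : w.level = 1 :=
      TVert.level_eq_of_natCast_eq (by omega) (by push_cast; linear_combination -h)
    have h0 : w'.level = 0 :=
      TVert.level_eq_of_natCast_eq (by omega) (by push_cast; linear_combination -h')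
    exact Or.inl ⟨rfl, hc, by omega⟩)
  · obtain ⟨rfl, h, -⟩ | ⟨rfl, h, -⟩ := ha <;> (
    have h0 : w.level = 0 :=
      TVert.level_eq_of_natCast_eq (by omega) (by push_cast; linear_combination -h)
    have h1 : w'.level = 1 :=
      TVert.level_eq_of_natCast_eq (by omega) (by push_cast; linear_combination -h')
    exact Or.inr ⟨rfl, hc', by omega⟩)

lemma rot_diagOf_of_cylArrow {p q : ZMod (r + 3) × TVert r 1 1}
    (h : CylArrow TArrow p q) : Rot r (diagOf p) (diagOf q) := by
  obtain ⟨i, w⟩ := p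
  obtain ⟨i', w'⟩ := q
  simp only [CylArrow, TVert.tArrow_iff] at h
  simp only [Rot, diagOf, Diag.mk.injEq, ZMod.natCast_add_two_eq_neg_one,
    ZMod.natCast_add_three_eq_zero, add_zero]
  rcases h with ⟨rfl, hc, hl⟩ | ⟨rfl, hc', hl⟩
  · by_cases h0 : w'.level = 0
    · refine Or.inr (Or.inr (Or.inl ⟨i', ⟨rfl, by simp [hl, h0, sub_eq_add_neg], hc⟩, ?_⟩))
      exact (w'.level_eq_zero_iff.mp h0).imp (fun hR => ⟨rfl, by simp [h0], hR⟩)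
        (fun hB => ⟨rfl, by simp [h0], hB⟩)
    · refine Or.inl ⟨rfl, by rw [hl]; push_cast; ring, ?_⟩
      rw [hc, w'.colour_eq_P_iff.mpr h0]
  · by_cases h0 : w.level = 0
    · refine Or.inr (Or.inr (Or.inr ⟨i, ?_, rfl, by simp [hl, h0], hc'⟩))
      exact (w.level_eq_zero_iff.mp h0).imp (fun hR => ⟨rfl, by simp [h0], hR⟩)
        (fun hB => ⟨rfl, by simp [h0], hB⟩)
    · refine Or.inr (Or.inl ⟨rfl, by rw [hl]; push_cast; ring, ?_⟩)
      rw [hc', w.colour_eq_P_iff.mpr h0]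

lemma rot_diagOf_iff {p q : ZMod (r + 3) × TVert r 1 1} :
    Rot r (diagOf p) (diagOf q) ↔ CylArrow TArrow p q :=
  ⟨cylArrow_of_rot_diagOf, rot_diagOf_of_cylArrow⟩

lemma SeamTwist.i_ne {a b : Diag (r + 3)} (h : SeamTwist r 1 1 (r + 3) a b) : b.i ≠ a.i := by
  obtain ⟨-, -, ⟨d, hd, rfl⟩, hb⟩ := h
  obtain ⟨w, rfl⟩ := mem_piSetAt_iff.mp hd
  obtain ⟨w', rfl⟩ := mem_piSetAt_iff.mp hb
  have : Fact (1 < r + 3) := ⟨by omega⟩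
  rw [tauD_diagOf]
  simp [diagOf, cylTau]

lemma arrowD_diagOf_iff {p q : ZMod (r + 3) × TVert r 1 1} :
    ArrowD r 1 1 (r + 3) (diagOf p) (diagOf q) ↔ CylArrow TArrow p q := by
  constructor
  · rintro ⟨-, -, b, hrot, ⟨hseam, hb⟩ | ⟨-, rfl⟩⟩
    · obtain rfl : b = diagOf (q.1, treeRho q.2) := by rw [← rho_diagOf, hb, rho_rho]
      have h := rot_diagOf_iff.mp hrot
      have hfix : q.2 = treeRho q.2 := by
        simpa [TVert.treeRho_treeRho] using treeRho_eq_self_of_cylArrow h hseam.i_ne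
      rwa [← hfix] at h
    · exact rot_diagOf_iff.mp hrot
  · intro h
    refine ⟨diagOf_mem p, diagOf_mem q, diagOf q, rot_diagOf_iff.mpr h, ?_⟩
    by_cases hseam : SeamTwist r 1 1 (r + 3) (diagOf p) (diagOf q)
    · rw [rho_diagOf, treeRho_eq_self_of_cylArrow h hseam.i_ne]
      exact Or.inl ⟨hseam, rfl⟩
    · exact Or.inr ⟨hseam, rfl⟩

theorem isQuotientIso_diagOf_toCyl (r : ℕ) :
    IsQuotientIso r 1 1 (r + 3) TArrow (shiftPerm (r + 3) (treeRhoPerm r 1 ^ (r + 3)))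
      (diagOf ∘ toCyl (r + 3) (treeRhoPerm r 1 ^ (r + 3))) := by
  set s := treeRhoPerm r 1 ^ (r + 3)
  have hn : r + 3 ≠ 0 := by omega
  have hA : ∀ i j, TArrow (s i) (s j) ↔ TArrow i j := fun i j => by
    have := Equiv.Perm.rel_zpow_apply_iff (s := treeRhoPerm r 1)
      (fun _ _ => TVert.tArrow_treeRho_iff) ((r + 3 : ℕ) : ℤ) i j
    rwa [zpow_natCast] at this
  have hsrc : ∀ i j, TArrow i j → s i = i := fun i j h =>
    Equiv.Perm.pow_apply_eq_self_of_apply_eq_self (TVert.treeRho_eq_self_of_tArrow h) _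
  refine ⟨fun x => diagOf_mem _, fun d hd => ?_, fun x y => ?_, fun x => ?_, fun x y => ?_⟩
  · obtain ⟨p, rfl⟩ := exists_diagOf_eq hd
    obtain ⟨x, rfl⟩ := toCyl_surjective s p
    exact ⟨x, rfl⟩
  · exact diagOf_injective.eq_iff.trans (toCyl_eq_toCyl_iff s hn)
  · exact (congrArg diagOf (toCyl_zTau s hn x)).trans (tauD_diagOf _).symm
  · rw [Function.comp_apply, Function.comp_apply, arrowD_diagOf_iff,
      ← exists_zArrow_toCyl_eq_iff s hA hsrc]
    exact exists_congr fun y' => by rw [eq_comm, toCyl_eq_toCyl_iff s hn, and_comm]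

end Diagonals

/-- cluster category of type `D_n`. For every `n ≥ 4`, the
quiver `Γ^{n}_{n-3,1,1}` of coloured oriented single and paired diagonals of
a regular `n`-gon, associated to the tree `T_{n-3,1,1} = D_n` (the "single"
diagonals being non-contractible loops in the once-punctured `n`-gon), is
isomorphic, as a stable translation quiver, to `ℤ D_n / ⟨τ^{-n} ρ^{n}⟩`, the
AR-quiver of the cluster category `C_{D_n} = D^b(mod k D_n)/τ^{-1}Σ` (on
`ℤ D_n` the shift `Σ` acts as `τ^{-(n-1)}` composed with the diagram
automorphism `ρ` when `n` is odd, and as `τ^{-(n-1)}` when `n` is even). -/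
theorem gamma_iso_ZDn_quotient (n : ℕ) (hn : 4 ≤ n) :
    ∃ φ : ℤ × TVert (n - 3) 1 1 → Diag n,
      IsQuotientIso (n - 3) 1 1 n TArrow
        (shiftPerm n ((treeRhoPerm (n - 3) 1) ^ n)) φ := by
  obtain ⟨r, rfl⟩ : ∃ r, n = r + 3 := ⟨n - 3, by omega⟩
  rw [Nat.add_sub_cancel]
  exact ⟨_, isQuotientIso_diagOf_toCyl r⟩
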